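/- Let Γ be a finite connected simple graph on n ≥ 2 vertices whose adjacency matrix has spectral radius strictly less than 2. Then Γ contains no cycle (it is a tree) and has at most one vertex of degree ≥ 3. -/

import Mathlib

/-!
By the Rayleigh principle, a nonzero vector `x` with `r * ‖x‖ ^ 2 ≤ ⟪A x, x⟫` forces a symmetric
matrix `A` to have an eigenvalue `≥ r`. For the adjacency matrix it suffices that `x ≥ 0` and
`2 * x u ≤ ∑_{w ~ u} x w` at every vertex. The indicator of a cycle is such a vector, and so is
the `2`-eigenvector of the extended Dynkin diagram `D̃` around a path joining two vertices of
degree `≥ 3`: `2` on the path and `1` on the other neighbours of its endpoints.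
-/

open SimpleGraph Finset Matrix Module.End

theorem LinearMap.IsSymmetric.exists_hasEigenvalue_ge_of_le_inner {E : Type*}
    [NormedAddCommGroup E] [InnerProductSpace ℝ E] [FiniteDimensional ℝ E]
    {T : E →ₗ[ℝ] E} (hT : T.IsSymmetric) {x : E} (hx : x ≠ 0) {r : ℝ}
    (h : r * ‖x‖ ^ 2 ≤ inner ℝ (T x) x) : ∃ μ, HasEigenvalue T μ ∧ r ≤ μ := by
  have : Nontrivial E := ⟨⟨x, 0, hx⟩⟩
  refine ⟨_, hT.hasEigenvalue_iSup_of_finiteDimensional, ?_⟩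
  have hbdd : BddAbove (Set.range fun z : {z : E // z ≠ 0} ↦
      RCLike.re (inner ℝ (T z) (z : E)) / ‖(z : E)‖ ^ 2) :=
    ⟨‖LinearMap.toContinuousLinearMap T‖, by
      rintro _ ⟨z, rfl⟩
      exact (le_abs_self _).trans
        ((LinearMap.toContinuousLinearMap T).rayleighQuotient_le_norm z)⟩
  refine le_ciSup_of_le hbdd ⟨x, hx⟩ ?_
  rw [le_div_iff₀ (by positivity)]
  exact h

theorem Matrix.IsHermitian.exists_hasEigenvalue_ge_of_le_dotProduct {n : Type*} [Fintype n]
    [DecidableEq n] {A : Matrix n n ℝ} (hA : A.IsHermitian) {x : n → ℝ} (hx : x ≠ 0) {r : ℝ}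
    (h : r * (x ⬝ᵥ x) ≤ x ⬝ᵥ A *ᵥ x) : ∃ μ, HasEigenvalue (toLin' A) μ ∧ r ≤ μ := by
  have h' : r * ‖WithLp.toLp 2 x‖ ^ 2 ≤
      inner ℝ (toEuclideanLin A (WithLp.toLp 2 x)) (WithLp.toLp 2 x) := by
    rw [← real_inner_self_eq_norm_sq, EuclideanSpace.inner_toLp_toLp]
    simpa [EuclideanSpace.inner_toLp_toLp, dotProduct_comm] using h
  obtain ⟨μ, hμ, hrμ⟩ := (isSymmetric_toEuclideanLin_iff.mpr hA).exists_hasEigenvalue_ge_of_le_inner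
    (by simpa using hx) h'
  refine ⟨μ, ?_, hrμ⟩
  rw [hasEigenvalue_iff_mem_spectrum, spectrum_toLin', ← spectrum_toLpLin 2]
  exact hμ.mem_spectrum

namespace SimpleGraph

variable {V : Type*} {G : SimpleGraph V}

theorem Walk.IsPath.ncard_neighborSet_toSubgraph_eq_two {u v w : V} {p : G.Walk v w}
    (hp : p.IsPath) (hu : u ∈ p.support) (huv : u ≠ v) (huw : u ≠ w) :
    (p.toSubgraph.neighborSet u).ncard = 2 := by
  obtain ⟨i, rfl, hi⟩ := p.mem_support_iff_exists_getVert.mp hu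
  refine hp.ncard_neighborSet_toSubgraph_internal_eq_two (fun h ↦ huv ?_)
    (hi.lt_of_ne fun h ↦ huw ?_)
  · simp [h]
  · simp [h]

variable [Fintype V] [DecidableRel G.Adj]

theorem exists_hasEigenvalue_adjMatrix_ge_of_le_sum_neighborFinset [DecidableEq V]
    {x : V → ℝ} (hx₀ : 0 ≤ x) (hx : x ≠ 0) {r : ℝ}
    (h : ∀ u, r * x u ≤ ∑ w ∈ G.neighborFinset u, x w) :
    ∃ μ, HasEigenvalue (toLin' (G.adjMatrix ℝ)) μ ∧ r ≤ μ := by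
  refine (G.isHermitian_adjMatrix ℝ).exists_hasEigenvalue_ge_of_le_dotProduct hx ?_
  rw [dotProduct, dotProduct, Finset.mul_sum]
  refine sum_le_sum fun u _ ↦ ?_
  rw [adjMatrix_mulVec_apply]
  calc r * (x u * x u) = x u * (r * x u) := by ring
    _ ≤ x u * ∑ w ∈ G.neighborFinset u, x w := mul_le_mul_of_nonneg_left (h u) (hx₀ u)

theorem Walk.two_mul_le_sum_neighborFinset {u v w : V}
    {p : G.Walk v w} (hu : (p.toSubgraph.neighborSet u).ncard = 2) {x : V → ℝ} (hx₀ : 0 ≤ x)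
    {c : ℝ} (hc : ∀ z ∈ p.support, c ≤ x z) : 2 * c ≤ ∑ z ∈ G.neighborFinset u, x z := by
  classical
  obtain ⟨a, b, hab, hnbrs⟩ := Set.ncard_eq_two.mp hu
  have hmem : ∀ z ∈ ({a, b} : Finset V), G.Adj u z ∧ z ∈ p.support := by
    intro z hz
    have hadj : p.toSubgraph.Adj u z := by
      rw [← Subgraph.mem_neighborSet, hnbrs]; simpa using hz
    exact ⟨hadj.adj_sub, p.mem_verts_toSubgraph.mp hadj.snd_mem⟩
  calc 2 * c ≤ ∑ z ∈ {a, b}, x z := by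
        rw [sum_pair hab]
        linarith [hc a (hmem a (by simp)).2, hc b (hmem b (by simp)).2]
    _ ≤ ∑ z ∈ G.neighborFinset u, x z :=
        sum_le_sum_of_subset_of_nonneg
          (fun z hz ↦ (G.mem_neighborFinset u z).mpr (hmem z hz).1) fun z _ _ ↦ hx₀ z

theorem four_le_sum_neighborFinset {v s : V} (hs : G.Adj v s)
    (hv : 3 ≤ G.degree v) {x : V → ℝ} (hxs : 2 ≤ x s) (hx : ∀ z, G.Adj v z → 1 ≤ x z) :
    4 ≤ ∑ z ∈ G.neighborFinset v, x z := by
  classical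
  have hs' : s ∈ G.neighborFinset v := (G.mem_neighborFinset v s).mpr hs
  have hcard : (2 : ℝ) ≤ #((G.neighborFinset v).erase s) := by
    rw [card_erase_of_mem hs', card_neighborFinset_eq_degree]
    exact_mod_cast Nat.le_sub_one_of_lt hv
  have hrest :
      (#((G.neighborFinset v).erase s) : ℝ) ≤ ∑ z ∈ (G.neighborFinset v).erase s, x z := by
    simpa using sum_le_sum fun z hz ↦ hx z ((G.mem_neighborFinset v z).mp (mem_of_mem_erase hz))
  rw [← add_sum_erase _ _ hs']
  linarith

theorem exists_two_le_hasEigenvalue_adjMatrix_of_isCycle [DecidableEq V] {v : V}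
    {c : G.Walk v v} (hc : c.IsCycle) :
    ∃ μ, HasEigenvalue (toLin' (G.adjMatrix ℝ)) μ ∧ 2 ≤ μ := by
  set x : V → ℝ := fun u ↦ if u ∈ c.support then 1 else 0
  have hx₀ : 0 ≤ x := fun u ↦ by dsimp [x]; split_ifs <;> norm_num
  refine exists_hasEigenvalue_adjMatrix_ge_of_le_sum_neighborFinset hx₀
    (Function.ne_iff.mpr ⟨v, by simp [x]⟩) fun u ↦ ?_
  by_cases hu : u ∈ c.support
  · rw [show x u = 1 from if_pos hu]
    exact c.two_mul_le_sum_neighborFinset (hc.ncard_neighborSet_toSubgraph_eq_two hu) hx₀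
      fun z hz ↦ (if_pos hz).ge
  · rw [show x u = 0 from if_neg hu, mul_zero]
    exact sum_nonneg fun z _ ↦ hx₀ z

theorem exists_two_le_hasEigenvalue_adjMatrix_of_isPath [DecidableEq V] {v w : V}
    {p : G.Walk v w} (hp : p.IsPath) (hvw : v ≠ w)
    (hv : 3 ≤ G.degree v) (hw : 3 ≤ G.degree w) :
    ∃ μ, HasEigenvalue (toLin' (G.adjMatrix ℝ)) μ ∧ 2 ≤ μ := by
  set x : V → ℝ := fun u ↦ if u ∈ p.support then 2 else if G.Adj v u ∨ G.Adj w u then 1 else 0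
  have hx₀ : 0 ≤ x := fun u ↦ by dsimp [x]; split_ifs <;> norm_num
  have hx_path : ∀ z ∈ p.support, x z = 2 := fun z hz ↦ if_pos hz
  have hx_adj : ∀ z, G.Adj v z ∨ G.Adj w z → 1 ≤ x z := fun z hz ↦ by
    dsimp [x]; split_ifs <;> norm_num
  have hnil : ¬ p.Nil := Walk.not_nil_of_ne hvw
  refine exists_hasEigenvalue_adjMatrix_ge_of_le_sum_neighborFinset hx₀
    (Function.ne_iff.mpr ⟨v, by simp [hx_path v p.start_mem_support]⟩) fun u ↦ ?_
  by_cases hu : u ∈ p.support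
  · rw [hx_path u hu]
    rcases eq_or_ne u v with rfl | huv
    · linarith [four_le_sum_neighborFinset (p.adj_snd hnil) hv
        (hx_path _ (p.getVert_mem_support 1)).ge fun z hz ↦ hx_adj z (.inl hz)]
    rcases eq_or_ne u w with rfl | huw
    · linarith [four_le_sum_neighborFinset (p.adj_penultimate hnil).symm hw
        (hx_path _ (p.getVert_mem_support _)).ge fun z hz ↦ hx_adj z (.inr hz)]
    linarith [p.two_mul_le_sum_neighborFinset
      (hp.ncard_neighborSet_toSubgraph_eq_two hu huv huw) hx₀ fun z hz ↦ (hx_path z hz).ge]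
  by_cases hadj : G.Adj v u ∨ G.Adj w u
  · rw [show x u = 1 from (if_neg hu).trans (if_pos hadj)]
    obtain ⟨s, hs, hsu⟩ : ∃ s ∈ p.support, G.Adj u s := hadj.elim
      (fun h ↦ ⟨v, p.start_mem_support, h.symm⟩) (fun h ↦ ⟨w, p.end_mem_support, h.symm⟩)
    linarith [hx_path s hs,
      single_le_sum (fun z _ ↦ hx₀ z) ((G.mem_neighborFinset u s).mpr hsu)]
  · rw [show x u = 0 from (if_neg hu).trans (if_neg hadj), mul_zero]
    exact sum_nonneg fun z _ ↦ hx₀ z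

end SimpleGraph

theorem spectral_radius_lt_two_implies_tree_with_one_branch_vertex_general
    (V : Type) [Fintype V] [DecidableEq V]
    (G : SimpleGraph V) [DecidableRel G.Adj]
    (hconn : G.Connected)
    (hspec : ∀ μ : ℝ,
      Module.End.HasEigenvalue (Matrix.toLin' (G.adjMatrix ℝ)) μ → |μ| < 2) :
    G.IsAcyclic ∧ ∀ v w : V, 3 ≤ G.degree v → 3 ≤ G.degree w → v = w := by
  have hlt : ∀ μ, HasEigenvalue (toLin' (G.adjMatrix ℝ)) μ → μ < 2 :=
    fun μ hμ ↦ (le_abs_self μ).trans_lt (hspec μ hμ)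
  refine ⟨fun v c hc ↦ ?_, fun v w hv hw ↦ by_contra fun hvw ↦ ?_⟩
  · obtain ⟨μ, hμ, h2⟩ := exists_two_le_hasEigenvalue_adjMatrix_of_isCycle hc
    exact (hlt μ hμ).not_ge h2
  · obtain ⟨p, hp⟩ := (hconn v w).exists_isPath
    obtain ⟨μ, hμ, h2⟩ := exists_two_le_hasEigenvalue_adjMatrix_of_isPath hp hvw hv hw
    exact (hlt μ hμ).not_ge h2

theorem spectral_radius_lt_two_implies_tree_with_one_branch_vertex
    (V : Type) [Fintype V] [DecidableEq V]
    (G : SimpleGraph V) [DecidableRel G.Adj]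
    (hconn : G.Connected) (hcard : 2 ≤ Fintype.card V)
    (hspec : ∀ μ : ℝ,
      Module.End.HasEigenvalue (Matrix.toLin' (G.adjMatrix ℝ)) μ → |μ| < 2) :
    G.IsAcyclic ∧ ∀ v w : V, 3 ≤ G.degree v → 3 ≤ G.degree w → v = w :=
  spectral_radius_lt_two_implies_tree_with_one_branch_vertex_general V G hconn hspec
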